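/- arXiv:1010.1504 — 6 statements merged into one kernel-verified Lean document; each statement's English description precedes it below -/
import Mathlib

section
/- Let α > 0, σ ≥ 0 and suppose α - σ η_L > 0, α - σ η_1 > 0, α - σ η_2 > 0 and α - σ η_R > 0. Then for every λ ∈ ℝ the system of equations f(v) = w, α v - σ w = λ has exactly one solution (v, w) ∈ ℝ²; i.e. the deterministic PWL FitzHugh–Nagumo system has a unique equilibrium for every λ. -/
/-! Eliminating `w = f v`, the equilibria correspond to the solutions of `g v = λ` with
`g v = α v - σ f v`. On each of the four pieces `(-∞, 0]`, `[0, v₁]`, `[v₁, 1]`, `[1, ∞)` the map `g`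
is affine with slope `α - σ η > 0`, and the closed pieces overlap at the breakpoints, so `g` is
continuous, strictly increasing and tends to `±∞` at `±∞`; hence it is a bijection of `ℝ`. -/

open Set Filter Function

theorem existsUnique_graph_iff {X Y Z : Type*} (f : X → Y) (F : X → Y → Z) (z : Z) :
    (∃! p : X × Y, f p.1 = p.2 ∧ F p.1 p.2 = z) ↔ ∃! x, F x (f x) = z := by
  constructor
  · rintro ⟨⟨x, y⟩, ⟨hy, hx⟩, huniq⟩
    dsimp only at hy hx
    subst hy
    exact ⟨x, hx, fun x' hx' => congrArg Prod.fst (huniq (x', f x') ⟨rfl, hx'⟩)⟩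
  · rintro ⟨x, hx, huniq⟩
    refine ⟨(x, f x), ⟨rfl, hx⟩, ?_⟩
    rintro ⟨x', y'⟩ ⟨hy', hx'⟩
    dsimp only at hy' hx'
    subst hy'
    rw [huniq x' hx']

def IsIncreasingAffineOn (g : ℝ → ℝ) (s : Set ℝ) : Prop :=
  ∃ m k : ℝ, 0 < m ∧ EqOn g (fun v => m * v + k) s

namespace IsIncreasingAffineOn

variable {g : ℝ → ℝ} {s : Set ℝ}

theorem strictMonoOn (h : IsIncreasingAffineOn g s) : StrictMonoOn g s := by
  obtain ⟨m, k, hm, hg⟩ := h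
  intro x hx y hy hxy
  rw [hg hx, hg hy]
  dsimp only
  gcongr

theorem continuousOn (h : IsIncreasingAffineOn g s) : ContinuousOn g s := by
  obtain ⟨m, k, -, hg⟩ := h
  exact (continuous_const.mul continuous_id |>.add continuous_const).continuousOn.congr hg

theorem tendsto_atTop {c : ℝ} (h : IsIncreasingAffineOn g (Ici c)) :
    Tendsto g atTop atTop := by
  obtain ⟨m, k, hm, hg⟩ := h
  refine (tendsto_atTop_add_const_right _ k (tendsto_id.const_mul_atTop hm)).congr' ?_
  filter_upwards [eventually_ge_atTop c] with v hv using (hg hv).symm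

theorem tendsto_atBot {c : ℝ} (h : IsIncreasingAffineOn g (Iic c)) :
    Tendsto g atBot atBot := by
  obtain ⟨m, k, hm, hg⟩ := h
  refine (tendsto_atBot_add_const_right _ k (tendsto_id.const_mul_atBot hm)).congr' ?_
  filter_upwards [eventually_le_atBot c] with v hv using (hg hv).symm

theorem mul_sub_mul_of_eqOn_affine {f : ℝ → ℝ} {α σ η k : ℝ}
    (hf : EqOn f (fun v => η * v + k) s) (hη : 0 < α - σ * η) :
    IsIncreasingAffineOn (fun v => α * v - σ * f v) s :=
  ⟨α - σ * η, -(σ * k), hη, fun v hv => by simp only [hf hv]; ring⟩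

end IsIncreasingAffineOn

theorem bijective_of_isIncreasingAffineOn {g : ℝ → ℝ} {a b c : ℝ} (hab : a ≤ b) (hbc : b ≤ c)
    (h₁ : IsIncreasingAffineOn g (Iic a)) (h₂ : IsIncreasingAffineOn g (Icc a b))
    (h₃ : IsIncreasingAffineOn g (Icc b c)) (h₄ : IsIncreasingAffineOn g (Ici c)) :
    Bijective g := by
  have hac := hab.trans hbc
  have hIci : Ici a = (Icc a b ∪ Icc b c) ∪ Ici c := by
    rw [Icc_union_Icc_eq_Icc hab hbc, Icc_union_Ici_eq_Ici hac]
  have hmono : StrictMono g := by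
    refine h₁.strictMonoOn.Iic_union_Ici ?_
    rw [hIci]
    refine StrictMonoOn.union ?_ h₄.strictMonoOn ?_ isLeast_Ici
    · exact h₂.strictMonoOn.union h₃.strictMonoOn (isGreatest_Icc hab) (isLeast_Icc hbc)
    · rw [Icc_union_Icc_eq_Icc hab hbc]
      exact isGreatest_Icc hac
  have hcont : Continuous g := by
    rw [← continuousOn_univ, ← Iic_union_Ici (a := a), hIci]
    refine h₁.continuousOn.union_of_isClosed ?_ isClosed_Iic ?_
    · exact ((h₂.continuousOn.union_of_isClosed h₃.continuousOn isClosed_Icc isClosed_Icc)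
        |>.union_of_isClosed h₄.continuousOn (isClosed_Icc.union isClosed_Icc) isClosed_Ici)
    · exact (isClosed_Icc.union isClosed_Icc).union isClosed_Ici
  exact ⟨hmono.injective, hcont.surjective h₄.tendsto_atTop h₁.tendsto_atBot⟩

noncomputable def pwlNullcline (ηL η1 η2 ηR v1 w1 : ℝ) (v : ℝ) : ℝ :=
  if v ≤ 0 then ηL * v
  else if v ≤ v1 then η1 * v
  else if v ≤ 1 then η2 * (v - v1) + w1
  else ηR * (v - 1) + 1

section pwlNullcline

variable {ηL η1 η2 ηR v1 w1 : ℝ}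

theorem pwlNullcline_eqOn_Iic :
    EqOn (pwlNullcline ηL η1 η2 ηR v1 w1) (fun v => ηL * v + 0) (Iic 0) := by
  intro v (hv : v ≤ 0)
  simp [pwlNullcline, hv]

theorem pwlNullcline_eqOn_Icc_zero :
    EqOn (pwlNullcline ηL η1 η2 ηR v1 w1) (fun v => η1 * v + 0) (Icc 0 v1) := by
  rintro v ⟨hv0, hv1⟩
  rcases hv0.eq_or_lt with rfl | hv0
  · simp [pwlNullcline]
  · simp [pwlNullcline, hv0.not_ge, hv1]

theorem pwlNullcline_eqOn_Icc_one (hv1 : 0 < v1) (hw1 : η1 * v1 = w1) :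
    EqOn (pwlNullcline ηL η1 η2 ηR v1 w1) (fun v => η2 * v + (w1 - η2 * v1)) (Icc v1 1) := by
  rintro v ⟨hv1v, hv⟩
  have hv0 : ¬v ≤ 0 := by linarith
  rcases hv1v.eq_or_lt with rfl | hv1v
  · simp only [pwlNullcline, hv0, if_false, le_refl, if_true, hw1]; ring
  · simp only [pwlNullcline, hv0, hv1v.not_ge, hv, if_false, if_true]; ring

theorem pwlNullcline_eqOn_Ici (hv1 : v1 < 1) (hw1 : η2 * (1 - v1) + w1 = 1) :
    EqOn (pwlNullcline ηL η1 η2 ηR v1 w1) (fun v => ηR * v + (1 - ηR)) (Ici 1) := by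
  intro v (hv : 1 ≤ v)
  have hv0 : ¬v ≤ 0 := by linarith
  have hvv1 : ¬v ≤ v1 := by linarith
  rcases hv.eq_or_lt with rfl | hv
  · simp only [pwlNullcline, hv0, hvv1, if_false, le_refl, if_true, hw1]; ring
  · simp only [pwlNullcline, hv0, hvv1, hv.not_ge, if_false]; ring

end pwlNullcline

theorem stmt1_general (α σ ηL η1 η2 ηR v1 w1 : ℝ)
    (hv1 : 0 < v1) (hv1' : v1 < 1)
    (hη1 : η1 = w1 / v1) (hη2 : η2 = (1 - w1) / (1 - v1))
    (f : ℝ → ℝ)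
    (hf : ∀ v : ℝ, f v =
      if v ≤ 0 then ηL * v
      else if v ≤ v1 then η1 * v
      else if v ≤ 1 then η2 * (v - v1) + w1
      else ηR * (v - 1) + 1)
    (hL : 0 < α - σ * ηL) (h1 : 0 < α - σ * η1)
    (h2 : 0 < α - σ * η2) (hR : 0 < α - σ * ηR) :
    ∀ lam : ℝ, ∃! p : ℝ × ℝ, f p.1 = p.2 ∧ α * p.1 - σ * p.2 = lam := by
  obtain rfl : f = pwlNullcline ηL η1 η2 ηR v1 w1 := funext hf
  have hw1 : η1 * v1 = w1 := by rw [hη1]; field_simp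
  have hw1' : η2 * (1 - v1) + w1 = 1 := by
    rw [hη2, div_mul_cancel₀ _ (sub_ne_zero.2 hv1'.ne')]; ring
  have hbij : Bijective fun v => α * v - σ * pwlNullcline ηL η1 η2 ηR v1 w1 v :=
    bijective_of_isIncreasingAffineOn hv1.le hv1'.le
      (.mul_sub_mul_of_eqOn_affine pwlNullcline_eqOn_Iic hL)
      (.mul_sub_mul_of_eqOn_affine pwlNullcline_eqOn_Icc_zero h1)
      (.mul_sub_mul_of_eqOn_affine (pwlNullcline_eqOn_Icc_one hv1 hw1) h2)
      (.mul_sub_mul_of_eqOn_affine (pwlNullcline_eqOn_Ici hv1' hw1') hR)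
  exact fun lam => (existsUnique_graph_iff _ (fun v w => α * v - σ * w) lam).2
    (hbij.existsUnique lam)

/-- Under the stated sign conditions, for every `λ` the deterministic
piecewise-linear FitzHugh–Nagumo system has a unique equilibrium, i.e. the system
`f v = w`, `α v - σ w = λ` has exactly one solution `(v, w) ∈ ℝ²`. -/
theorem stmt1 (α σ ηL η1 η2 ηR v1 w1 : ℝ)
    (hv1 : 0 < v1) (hv1' : v1 < 1) (hw1 : 0 < w1) (hw1' : w1 < 1)
    (hη1 : η1 = w1 / v1) (hη2 : η2 = (1 - w1) / (1 - v1))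
    (hηL : ηL < 0) (hηR : ηR < 0)
    (f : ℝ → ℝ)
    (hf : ∀ v : ℝ, f v =
      if v ≤ 0 then ηL * v
      else if v ≤ v1 then η1 * v
      else if v ≤ 1 then η2 * (v - v1) + w1
      else ηR * (v - 1) + 1)
    (hα : 0 < α) (hσ : 0 ≤ σ)
    (hL : 0 < α - σ * ηL) (h1 : 0 < α - σ * η1)
    (h2 : 0 < α - σ * η2) (hR : 0 < α - σ * ηR) :
    ∀ lam : ℝ, ∃! p : ℝ × ℝ, f p.1 = p.2 ∧ α * p.1 - σ * p.2 = lam :=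
  stmt1_general α σ ηL η1 η2 ηR v1 w1 hv1 hv1' hη1 hη2 f hf hL h1 h2 hR
end

section
/- Let α > 0, σ ≥ 0 and suppose α - σ η_L > 0, α - σ η_1 > 0, α - σ η_2 > 0 and α - σ η_R > 0. If 0 < λ ≤ (α - σ η_1) v_1, then the unique solution (v, w) of the system f(v) = w, α v - σ w = λ is (v, w) = (λ/(α - σ η_1), η_1 λ/(α - σ η_1)), and it satisfies 0 < v ≤ v_1 (the equilibrium is admissible, lying in the closure of the region 0 < v < v_1). -/
/-!
The equilibria are the zeros of `v ↦ α v - σ f(v) - λ`. Because `f` is continuous and each of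
its four linear pieces has slope `η` with `α - σ η > 0`, the map `v ↦ α v - σ f(v)` is strictly
increasing, so it takes the value `λ` at most once. On the piece `0 < v ≤ v₁` the equation is
linear with root `λ / (α - σ η₁)`, which lies in that piece exactly when `0 < λ ≤ (α - σ η₁) v₁`.
-/

open Set

theorem StrictMonoOn.of_eqOn_affine {g : ℝ → ℝ} {s : Set ℝ} {a b : ℝ} (ha : 0 < a)
    (h : EqOn g (fun v => a * v + b) s) : StrictMonoOn g s :=
  (((strictMono_mul_left_of_pos ha).add_const b).strictMonoOn s).congr h.symm

theorem StrictMono.of_strictMonoOn_Iic_Icc_Icc_Ici {α β : Type*} [LinearOrder α] [Preorder β]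
    {g : α → β} {a b c : α}
    (hab : a ≤ b) (hbc : b ≤ c) (h₀ : StrictMonoOn g (Iic a)) (h₁ : StrictMonoOn g (Icc a b))
    (h₂ : StrictMonoOn g (Icc b c)) (h₃ : StrictMonoOn g (Ici c)) : StrictMono g := by
  have hb : StrictMonoOn g (Ici b) := by
    simpa only [Icc_union_Ici_eq_Ici hbc] using h₂.union h₃ (isGreatest_Icc hbc) isLeast_Ici
  have ha : StrictMonoOn g (Ici a) := by
    simpa only [Icc_union_Ici_eq_Ici hab] using h₁.union hb (isGreatest_Icc hab) isLeast_Ici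
  exact h₀.Iic_union_Ici ha

noncomputable def pwlCubic (ηL η1 η2 ηR v1 w1 v : ℝ) : ℝ :=
  if v ≤ 0 then ηL * v
  else if v ≤ v1 then η1 * v
  else if v ≤ 1 then η2 * (v - v1) + w1
  else ηR * (v - 1) + 1

section PwlCubic

variable {ηL η1 η2 ηR v1 w1 : ℝ}

theorem pwlCubic_of_nonpos {v : ℝ} (hv : v ≤ 0) : pwlCubic ηL η1 η2 ηR v1 w1 v = ηL * v := by
  simp only [pwlCubic, if_pos hv]

theorem pwlCubic_of_mem_Icc_zero {v : ℝ} (hv : v ∈ Icc 0 v1) :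
    pwlCubic ηL η1 η2 ηR v1 w1 v = η1 * v := by
  rcases hv.1.eq_or_lt with rfl | hpos
  · simp only [pwlCubic, le_refl, if_true, mul_zero]
  · simp only [pwlCubic, if_neg hpos.not_ge, if_pos hv.2]

theorem pwlCubic_of_mem_Icc_v1 (hv1 : 0 < v1) (hw1 : η1 * v1 = w1) {v : ℝ} (hv : v ∈ Icc v1 1) :
    pwlCubic ηL η1 η2 ηR v1 w1 v = η2 * (v - v1) + w1 := by
  have hpos : ¬v ≤ 0 := by linarith [hv.1]
  rcases hv.1.eq_or_lt with rfl | hgt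
  · simp only [pwlCubic, if_neg hpos, le_refl, if_true, hw1, sub_self, mul_zero, zero_add]
  · simp only [pwlCubic, if_neg hpos, if_neg hgt.not_ge, if_pos hv.2]

theorem pwlCubic_of_one_le (hv1 : 0 < v1) (hv1' : v1 < 1) (hw2 : η2 * (1 - v1) = 1 - w1)
    {v : ℝ} (hv : 1 ≤ v) : pwlCubic ηL η1 η2 ηR v1 w1 v = ηR * (v - 1) + 1 := by
  have hpos : ¬v ≤ 0 := by linarith
  have hgt : ¬v ≤ v1 := by linarith
  rcases hv.eq_or_lt with rfl | hgt1
  · simp only [pwlCubic, if_neg hpos, if_neg hgt, le_refl, if_true, hw2]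
    ring
  · simp only [pwlCubic, if_neg hpos, if_neg hgt, if_neg hgt1.not_ge]

theorem strictMono_sub_mul_pwlCubic {α σ : ℝ} (hv1 : 0 < v1) (hv1' : v1 < 1)
    (hw1 : η1 * v1 = w1) (hw2 : η2 * (1 - v1) = 1 - w1)
    (hL : 0 < α - σ * ηL) (h1 : 0 < α - σ * η1) (h2 : 0 < α - σ * η2) (hR : 0 < α - σ * ηR) :
    StrictMono fun v => α * v - σ * pwlCubic ηL η1 η2 ηR v1 w1 v := by
  refine .of_strictMonoOn_Iic_Icc_Icc_Ici hv1.le hv1'.le ?_ ?_ ?_ ?_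
  · refine .of_eqOn_affine hL (b := 0) fun v hv => ?_
    simp only [pwlCubic_of_nonpos (mem_Iic.mp hv)]
    ring
  · refine .of_eqOn_affine h1 (b := 0) fun v hv => ?_
    simp only [pwlCubic_of_mem_Icc_zero hv]
    ring
  · refine .of_eqOn_affine h2 (b := σ * η2 * v1 - σ * w1) fun v hv => ?_
    simp only [pwlCubic_of_mem_Icc_v1 hv1 hw1 hv]
    ring
  · refine .of_eqOn_affine hR (b := σ * ηR - σ) fun v hv => ?_
    simp only [pwlCubic_of_one_le hv1 hv1' hw2 (mem_Ici.mp hv)]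
    ring

end PwlCubic

theorem stmt2_general (α σ ηL η1 η2 ηR v1 w1 lam : ℝ)
    (hv1 : 0 < v1) (hv1' : v1 < 1)
    (hη1 : η1 = w1 / v1) (hη2 : η2 = (1 - w1) / (1 - v1))
    (f : ℝ → ℝ)
    (hf : ∀ v : ℝ, f v =
      if v ≤ 0 then ηL * v
      else if v ≤ v1 then η1 * v
      else if v ≤ 1 then η2 * (v - v1) + w1
      else ηR * (v - 1) + 1)
    (hL : 0 < α - σ * ηL) (h1 : 0 < α - σ * η1)
    (h2 : 0 < α - σ * η2) (hR : 0 < α - σ * ηR)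
    (hlam0 : 0 < lam) (hlam1 : lam ≤ (α - σ * η1) * v1) :
    (f (lam / (α - σ * η1)) = η1 * lam / (α - σ * η1) ∧
      α * (lam / (α - σ * η1)) - σ * (η1 * lam / (α - σ * η1)) = lam) ∧
    (0 < lam / (α - σ * η1) ∧ lam / (α - σ * η1) ≤ v1) ∧
    (∀ v w : ℝ, f v = w → α * v - σ * w = lam →
      v = lam / (α - σ * η1) ∧ w = η1 * lam / (α - σ * η1)) := by
  obtain rfl : f = pwlCubic ηL η1 η2 ηR v1 w1 := funext hf
  have hw1 : η1 * v1 = w1 := by rw [hη1]; field_simp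
  have hw2 : η2 * (1 - v1) = 1 - w1 := by rw [hη2]; field_simp [(sub_pos.mpr hv1').ne']
  set v₀ := lam / (α - σ * η1)
  have hv₀_pos : 0 < v₀ := div_pos hlam0 h1
  have hv₀_le : v₀ ≤ v1 := (div_le_iff₀' h1).mpr hlam1
  have hfv₀ : pwlCubic ηL η1 η2 ηR v1 w1 v₀ = η1 * lam / (α - σ * η1) := by
    rw [pwlCubic_of_mem_Icc_zero ⟨hv₀_pos.le, hv₀_le⟩, mul_div_assoc]
  have hgv₀ : α * v₀ - σ * (η1 * lam / (α - σ * η1)) = lam := by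
    simp only [v₀]
    field_simp
  refine ⟨⟨hfv₀, hgv₀⟩, ⟨hv₀_pos, hv₀_le⟩, fun v w hfw hgw => ?_⟩
  subst hfw
  have hv : v = v₀ := (strictMono_sub_mul_pwlCubic hv1 hv1' hw1 hw2 hL h1 h2 hR).injective <| by
    simp only [hfv₀, hgw, hgv₀]
  exact ⟨hv, hv ▸ hfv₀⟩

/-- Under the stated sign conditions, if `0 < λ ≤ (α - σ η₁) v₁` then the
unique solution of `f v = w`, `α v - σ w = λ` is
`(v, w) = (λ/(α - σ η₁), η₁ λ/(α - σ η₁))`, and it satisfies `0 < v ≤ v₁`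
(the equilibrium is admissible). -/
theorem stmt2 (α σ ηL η1 η2 ηR v1 w1 lam : ℝ)
    (hv1 : 0 < v1) (hv1' : v1 < 1) (hw1 : 0 < w1) (hw1' : w1 < 1)
    (hη1 : η1 = w1 / v1) (hη2 : η2 = (1 - w1) / (1 - v1))
    (hηL : ηL < 0) (hηR : ηR < 0)
    (f : ℝ → ℝ)
    (hf : ∀ v : ℝ, f v =
      if v ≤ 0 then ηL * v
      else if v ≤ v1 then η1 * v
      else if v ≤ 1 then η2 * (v - v1) + w1
      else ηR * (v - 1) + 1)
    (hα : 0 < α) (hσ : 0 ≤ σ)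
    (hL : 0 < α - σ * ηL) (h1 : 0 < α - σ * η1)
    (h2 : 0 < α - σ * η2) (hR : 0 < α - σ * ηR)
    (hlam0 : 0 < lam) (hlam1 : lam ≤ (α - σ * η1) * v1) :
    (f (lam / (α - σ * η1)) = η1 * lam / (α - σ * η1) ∧
      α * (lam / (α - σ * η1)) - σ * (η1 * lam / (α - σ * η1)) = lam) ∧
    (0 < lam / (α - σ * η1) ∧ lam / (α - σ * η1) ≤ v1) ∧
    (∀ v w : ℝ, f v = w → α * v - σ * w = lam →
      v = lam / (α - σ * η1) ∧ w = η1 * lam / (α - σ * η1)) :=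
  stmt2_general α σ ηL η1 η2 ηR v1 w1 lam hv1 hv1' hη1 hη2 f hf hL h1 h2 hR hlam0 hlam1
end

section
/- Let ε > 0, α > 0, σ ≥ 0, λ ∈ ℝ and η_1 ∈ ℝ with (η_1 + εσ)² < 4εα, and set ω_1 = ½√(4εα - (η_1 + εσ)²), v_1* = λ/(α - σ η_1), w_1* = η_1 v_1*. Let (v(t), w(t)) be the solution of v' = η_1 v - w, w' = ε(αv - σw - λ) with initial condition (v(0), w(0)) = (0, 0). Then at the half-period time T = π/ω_1 one has (v(T), w(T)) = (1 + E)(v_1*, w_1*), where E = e^{(η_1 - εσ)π/(2ω_1)}; in particular w(T) = η_1 v(T) (the point lies on the v-nullcline), and v(T) = v_1 holds if and only if λ = (α v_1 - σ w_1)/(1 + E) where w_1 = η_1 v_1. -/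
/-!
Shifting to the equilibrium `(v₁*, w₁*)` makes the system linear and homogeneous. For a root
`c = μ + iω₁` of its characteristic polynomial, `μ = (η₁ - εσ)/2`, the complex coordinate
`ξ = (c + εσ)(v - v₁*) - (w - w₁*)` satisfies `ξ' = c ξ`, so `ξ(t) = e^{ct} ξ(0)`. At the half
period `T = π/ω₁` the rotation `e^{iπ} = -1` gives `ξ(T) = -E ξ(0)`, and since `c + εσ` is not
real this single complex identity determines both `v T` and `w T`.
-/

open Complex

theorem eq_cexp_mul_of_hasDerivAt {f : ℝ → ℂ} {c : ℂ} (hf : ∀ t, HasDerivAt f (c * f t) t)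
    (t : ℝ) : f t = cexp (c * t) * f 0 := by
  have hderiv : ∀ s : ℝ, HasDerivAt (fun s : ℝ => cexp (-c * s) * f s) 0 s := by
    intro s
    have hexp : HasDerivAt (fun s : ℝ => cexp (-c * s)) (cexp (-c * s) * -c) s := by
      simpa using ((hasDerivAt_id s).ofReal_comp.const_mul (-c)).cexp
    refine (hexp.mul (hf s)).congr_deriv ?_
    ring
  have hconst : cexp (-c * t) * f t = f 0 := by
    simpa using is_const_of_deriv_eq_zero (fun s => (hderiv s).differentiableAt)
      (fun s => (hderiv s).deriv) t 0
  calc f t = cexp (c * t + -c * t) * f t := by simp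
    _ = cexp (c * t) * f 0 := by rw [Complex.exp_add, mul_assoc, hconst]

theorem eq_zero_of_mul_ofReal_sub_ofReal_eq_zero {d : ℂ} (hd : d.im ≠ 0) {x y : ℝ}
    (h : d * x - y = 0) : x = 0 ∧ y = 0 := by
  have him : d.im * x = 0 := by simpa using congrArg Complex.im h
  have hx : x = 0 := (mul_eq_zero.mp him).resolve_left hd
  subst hx
  simpa [eq_comm] using h

theorem cexp_mul_pi_div (μ ω : ℝ) (hω : ω ≠ 0) :
    cexp ((μ + ω * I) * (Real.pi / ω : ℝ)) = -(Real.exp (μ * Real.pi / ω) : ℂ) := by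
  have hsplit : (μ + ω * I) * (Real.pi / ω : ℝ) = (μ * Real.pi / ω : ℝ) + Real.pi * I := by
    have hω' : (ω : ℂ) ≠ 0 := by exact_mod_cast hω
    push_cast
    field_simp
  rw [hsplit, Complex.exp_add, exp_pi_mul_I, ← Complex.ofReal_exp]
  ring

section LinearPiece

variable {η ε α σ lam vs ws : ℝ} {v w : ℝ → ℝ}

theorem eigencoordinate_eq_cexp_mul {c : ℂ}
    (hc : c ^ 2 - (η - ε * σ) * c + ε * (α - σ * η) = 0)
    (hws : ws = η * vs) (hlam : α * vs - σ * ws = lam)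
    (hv : ∀ t : ℝ, HasDerivAt v (η * v t - w t) t)
    (hw : ∀ t : ℝ, HasDerivAt w (ε * (α * v t - σ * w t - lam)) t) (t : ℝ) :
    (c + ε * σ) * (v t - vs : ℝ) - (w t - ws : ℝ)
      = cexp (c * t) * ((c + ε * σ) * (v 0 - vs : ℝ) - (w 0 - ws : ℝ)) := by
  refine eq_cexp_mul_of_hasDerivAt (f := fun t => (c + ε * σ) * (v t - vs : ℝ) - (w t - ws : ℝ))
    (fun t => ?_) t
  have hξ := (((hv t).sub_const vs).ofReal_comp.const_mul (c + ε * σ)).sub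
    ((hw t).sub_const ws).ofReal_comp
  refine hξ.congr_deriv ?_
  have hlam' := congrArg Complex.ofReal hlam
  rw [hws] at hlam' ⊢
  push_cast at hlam' ⊢
  linear_combination (↑vs - ↑(v t) : ℂ) * hc - (ε : ℂ) * hlam'

theorem state_at_half_period {ω : ℝ} (hω : ω ≠ 0)
    (hω2 : ω ^ 2 = ε * (α - σ * η) - ((η - ε * σ) / 2) ^ 2)
    (hws : ws = η * vs) (hlam : α * vs - σ * ws = lam) (hv0 : v 0 = 0) (hw0 : w 0 = 0)
    (hv : ∀ t : ℝ, HasDerivAt v (η * v t - w t) t)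
    (hw : ∀ t : ℝ, HasDerivAt w (ε * (α * v t - σ * w t - lam)) t) :
    v (Real.pi / ω) = (1 + Real.exp ((η - ε * σ) / 2 * Real.pi / ω)) * vs ∧
      w (Real.pi / ω) = (1 + Real.exp ((η - ε * σ) / 2 * Real.pi / ω)) * ws := by
  set c : ℂ := ((η - ε * σ) / 2 : ℝ) + ω * I
  have hc : c ^ 2 - (η - ε * σ) * c + ε * (α - σ * η) = 0 := by
    have hω2' := congrArg Complex.ofReal hω2
    simp only [c]
    push_cast at hω2' ⊢
    linear_combination (-1 : ℂ) * hω2' + (ω : ℂ) ^ 2 * I_sq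
  have hξ := eigencoordinate_eq_cexp_mul hc hws hlam hv hw (Real.pi / ω)
  rw [cexp_mul_pi_div _ ω hω, hv0, hw0] at hξ
  have hdeviation :
      (c + ε * σ) * (v (Real.pi / ω) - (1 + Real.exp ((η - ε * σ) / 2 * Real.pi / ω)) * vs : ℝ)
        - (w (Real.pi / ω) - (1 + Real.exp ((η - ε * σ) / 2 * Real.pi / ω)) * ws : ℝ) = 0 := by
    push_cast at hξ ⊢
    linear_combination hξ
  have him : (c + ε * σ).im ≠ 0 := by simpa [c] using hω
  obtain ⟨hvT, hwT⟩ := eq_zero_of_mul_ofReal_sub_ofReal_eq_zero him hdeviation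
  exact ⟨sub_eq_zero.mp hvT, sub_eq_zero.mp hwT⟩

end LinearPiece

theorem stmt8_general (ε α σ lam η1 ω1 v1s w1s v1 T E : ℝ)
    (hε : 0 < ε)
    (hdisc : (η1 + ε * σ) ^ 2 < 4 * ε * α)
    (hω : ω1 = Real.sqrt (4 * ε * α - (η1 + ε * σ) ^ 2) / 2)
    (hvs : v1s = lam / (α - σ * η1)) (hws : w1s = η1 * v1s)
    (hT : T = Real.pi / ω1) (hE : E = Real.exp ((η1 - ε * σ) * Real.pi / (2 * ω1)))
    (v w : ℝ → ℝ) (hv0 : v 0 = 0) (hw0 : w 0 = 0)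
    (hv : ∀ t : ℝ, HasDerivAt v (η1 * v t - w t) t)
    (hw : ∀ t : ℝ, HasDerivAt w (ε * (α * v t - σ * w t - lam)) t) :
    v T = (1 + E) * v1s ∧ w T = (1 + E) * w1s ∧
    w T = η1 * v T ∧
    (v T = v1 ↔ lam = (α * v1 - σ * (η1 * v1)) / (1 + E)) := by
  have hdisc' : 0 < 4 * ε * α - (η1 + ε * σ) ^ 2 := by linarith
  have hω1 : 0 < ω1 := by rw [hω]; positivity
  have hω2 : ω1 ^ 2 = ε * (α - σ * η1) - ((η1 - ε * σ) / 2) ^ 2 := by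
    rw [hω, div_pow, Real.sq_sqrt hdisc'.le]; ring
  have hαση : α - σ * η1 ≠ 0 := by
    have : σ * η1 < α := by nlinarith [sq_nonneg (η1 - ε * σ)]
    linarith
  have hlam : α * v1s - σ * w1s = lam := by
    rw [hws, hvs]; field_simp
  have hET : E = Real.exp ((η1 - ε * σ) / 2 * Real.pi / ω1) := by rw [hE]; congr 1; field_simp
  obtain ⟨hvT, hwT⟩ := state_at_half_period hω1.ne' hω2 hws hlam hv0 hw0 hv hw
  rw [← hT, ← hET] at hvT hwT
  have hE1 : 1 + E ≠ 0 := by rw [hE]; positivity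
  refine ⟨hvT, hwT, by rw [hvT, hwT, hws]; ring, ?_⟩
  rw [hvT, hvs, mul_div_assoc', div_eq_iff hαση, eq_div_iff hE1]
  constructor <;> intro h <;> linarith

/-- For the focus-case linear piece `v' = η₁ v - w`, `w' = ε(αv - σw - λ)`
started at the origin, at the half-period `T = π/ω₁` one has
`(v T, w T) = (1 + E) • (v₁*, w₁*)` where `E = e^{(η₁ - εσ)π/(2ω₁)}`; in particular
`w T = η₁ v T`, and `v T = v₁` iff `λ = (α v₁ - σ w₁)/(1 + E)` with `w₁ = η₁ v₁`. -/
theorem stmt8 (ε α σ lam η1 ω1 v1s w1s v1 T E : ℝ)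
    (hε : 0 < ε) (hα : 0 < α) (hσ : 0 ≤ σ)
    (hdisc : (η1 + ε * σ) ^ 2 < 4 * ε * α)
    (hω : ω1 = Real.sqrt (4 * ε * α - (η1 + ε * σ) ^ 2) / 2)
    (hvs : v1s = lam / (α - σ * η1)) (hws : w1s = η1 * v1s)
    (hT : T = Real.pi / ω1) (hE : E = Real.exp ((η1 - ε * σ) * Real.pi / (2 * ω1)))
    (v w : ℝ → ℝ) (hv0 : v 0 = 0) (hw0 : w 0 = 0)
    (hv : ∀ t : ℝ, HasDerivAt v (η1 * v t - w t) t)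
    (hw : ∀ t : ℝ, HasDerivAt w (ε * (α * v t - σ * w t - lam)) t) :
    v T = (1 + E) * v1s ∧ w T = (1 + E) * w1s ∧
    w T = η1 * v T ∧
    (v T = v1 ↔ lam = (α * v1 - σ * (η1 * v1)) / (1 + E)) :=
  stmt8_general ε α σ lam η1 ω1 v1s w1s v1 T E hε hdisc hω hvs hws hT hE v w hv0 hw0 hv hw
end

section
/- Let A be the 2×2 real matrix with rows [η, -1] and [εα, -εσ] (so its (1,2) entry is -1 ≠ 0), let D ≠ 0, e₂ = (0,1)ᵀ, and Θ(t) = D² ∫₀ᵗ (e^{As} e₂)(e^{As} e₂)ᵀ ds. Then for every t > 0 the matrix Θ(t) is positive definite; in particular det Θ(t) > 0, even though the noise enters only the second coordinate. -/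
open Matrix Filter Topology Set

/-!
For `x ≠ 0`, `xᵀ Θ(t) x = D² ∫₀ᵗ f(s)² ds` with `f(s) = x ⬝ e^{sA} e₂`. Since `f(0) = x ⬝ e₂` and
`f'(0) = x ⬝ A e₂`, and `e₂, A e₂` span `ℝ²` as soon as `A₀₁ ≠ 0` (Kalman's rank condition), `f`
has at most a simple zero at `0`; so it is nonzero somewhere in `(0, t)` and the integral is
positive.
-/

theorem intervalIntegral_pos_of_continuous_of_nonneg {g : ℝ → ℝ} (hg : Continuous g)
    (hg0 : ∀ s, 0 ≤ g s) {a b s₀ : ℝ} (hs₀ : s₀ ∈ Ioo a b) (hgs₀ : g s₀ ≠ 0) :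
    0 < ∫ s in a..b, g s := by
  rw [intervalIntegral.integral_pos_iff_support_of_nonneg_ae (.of_forall hg0)
    (hg.intervalIntegrable a b)]
  refine ⟨hs₀.1.trans hs₀.2, ?_⟩
  calc (0 : ENNReal) < MeasureTheory.volume (Function.support g ∩ Ioo a b) :=
        (hg.isOpen_support.inter isOpen_Ioo).measure_pos _ ⟨s₀, hgs₀, hs₀⟩
    _ ≤ _ := MeasureTheory.measure_mono (inter_subset_inter_right _ Ioo_subset_Ioc_self)

theorem eventually_ne_zero_of_hasDerivAt {f : ℝ → ℝ} {f' a : ℝ} (hf : HasDerivAt f f' a)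
    (h : f a ≠ 0 ∨ f' ≠ 0) : ∀ᶠ s in 𝓝[≠] a, f s ≠ 0 := by
  rcases h with h | h
  · exact nhdsWithin_le_nhds (hf.continuousAt.eventually_ne h)
  · exact hf.eventually_ne h

noncomputable def gramian {n : Type*} (v : ℝ → n → ℝ) (t : ℝ) : Matrix n n ℝ :=
  of fun i j => ∫ s in (0 : ℝ)..t, v s i * v s j

theorem gramian_isHermitian {n : Type*} (v : ℝ → n → ℝ) (t : ℝ) : (gramian v t).IsHermitian := by
  ext i j
  simp only [gramian, conjTranspose_apply, of_apply, star_trivial, mul_comm]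

section Gramian

variable {n : Type*} [Fintype n]

theorem dotProduct_gramian_mulVec {v : ℝ → n → ℝ} (hv : Continuous v) (t : ℝ) (x : n → ℝ) :
    x ⬝ᵥ (gramian v t *ᵥ x) = ∫ s in (0 : ℝ)..t, (x ⬝ᵥ v s) ^ 2 := by
  have hcont (i j : n) : Continuous fun s => x i * x j * (v s i * v s j) := by fun_prop
  have hsq (s : ℝ) : (x ⬝ᵥ v s) ^ 2 = ∑ i, ∑ j, x i * x j * (v s i * v s j) := by
    simp only [sq, dotProduct, Finset.sum_mul_sum]
    exact Finset.sum_congr rfl fun i _ => Finset.sum_congr rfl fun j _ => by ring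
  simp_rw [hsq]
  rw [intervalIntegral.integral_finsetSum fun i _ =>
    (continuous_finsetSum _ fun j _ => hcont i j).intervalIntegrable 0 t]
  simp only [dotProduct, mulVec, gramian, of_apply, Finset.mul_sum]
  refine Finset.sum_congr rfl fun i _ => ?_
  rw [intervalIntegral.integral_finsetSum fun j _ => (hcont i j).intervalIntegrable 0 t]
  refine Finset.sum_congr rfl fun j _ => ?_
  rw [intervalIntegral.integral_const_mul]
  ring

theorem gramian_posDef {v : ℝ → n → ℝ} (hv : Continuous v) {t : ℝ}
    (hv_ne : ∀ x : n → ℝ, x ≠ 0 → ∃ s ∈ Ioo 0 t, x ⬝ᵥ v s ≠ 0) : (gramian v t).PosDef := by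
  refine .of_dotProduct_mulVec_pos (gramian_isHermitian v t) fun x hx => ?_
  obtain ⟨s₀, hs₀, hxs₀⟩ := hv_ne x hx
  rw [star_trivial, dotProduct_gramian_mulVec hv]
  exact intervalIntegral_pos_of_continuous_of_nonneg
    ((continuous_const.dotProduct hv).pow 2) (fun s => sq_nonneg _) hs₀ (pow_ne_zero 2 hxs₀)

end Gramian

section MatrixExp

variable {n : Type*} [Fintype n]

theorem HasDerivAt.const_dotProduct {f : ℝ → n → ℝ} {f' : n → ℝ} {s : ℝ} (hf : HasDerivAt f f' s)
    (x : n → ℝ) : HasDerivAt (fun u => x ⬝ᵥ f u) (x ⬝ᵥ f') s := by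
  simpa only [dotProduct] using
    HasDerivAt.fun_sum fun i _ => (hasDerivAt_pi.1 hf i).const_mul (x i)

variable [DecidableEq n]

theorem hasDerivAt_exp_smul_mulVec (A : Matrix n n ℝ) (b : n → ℝ) (s : ℝ) :
    HasDerivAt (fun u : ℝ => NormedSpace.exp (u • A) *ᵥ b)
      ((NormedSpace.exp (s • A) * A) *ᵥ b) s := by
  -- Any Banach algebra norm on matrices will do; it induces the product topology.
  let _ : NormedRing (Matrix n n ℝ) := Matrix.linftyOpNormedRing
  let _ : NormedAlgebra ℝ (Matrix n n ℝ) := Matrix.linftyOpNormedAlgebra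
  let L : Matrix n n ℝ →L[ℝ] n → ℝ := LinearMap.toContinuousLinearMap
    { toFun := fun M => M *ᵥ b
      map_add' := fun M N => add_mulVec M N b
      map_smul' := fun c M => smul_mulVec c M b }
  exact L.hasFDerivAt.comp_hasDerivAt s (hasDerivAt_exp_smul_const A s)

theorem exists_dotProduct_exp_smul_mulVec_ne_zero (A : Matrix n n ℝ) {b x : n → ℝ}
    (h : x ⬝ᵥ b ≠ 0 ∨ x ⬝ᵥ (A *ᵥ b) ≠ 0) {t : ℝ} (ht : 0 < t) :
    ∃ s ∈ Ioo 0 t, x ⬝ᵥ (NormedSpace.exp (s • A) *ᵥ b) ≠ 0 := by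
  have hderiv := (hasDerivAt_exp_smul_mulVec A b 0).const_dotProduct x
  simp only [zero_smul, NormedSpace.exp_zero, one_mul] at hderiv
  have hne := eventually_ne_zero_of_hasDerivAt hderiv (by simpa using h)
  exact (Filter.Eventually.and (Ioo_mem_nhdsGT ht) (nhdsGT_le_nhdsNE 0 hne)).exists.imp fun _ => id

end MatrixExp

theorem dotProduct_ne_zero_or_dotProduct_mulVec_ne_zero {A : Matrix (Fin 2) (Fin 2) ℝ}
    (hA : A 0 1 ≠ 0) {x : Fin 2 → ℝ} (hx : x ≠ 0) :
    x ⬝ᵥ ![0, 1] ≠ 0 ∨ x ⬝ᵥ (A *ᵥ ![0, 1]) ≠ 0 := by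
  by_contra! ⟨h₁, h₂⟩
  simp only [dotProduct, mulVec, Fin.sum_univ_two, Matrix.cons_val_zero, Matrix.cons_val_one,
    mul_zero, mul_one, zero_add] at h₁ h₂
  rw [h₁, zero_mul, add_zero, mul_eq_zero] at h₂
  exact hx (funext (Fin.forall_fin_two.2 ⟨h₂.resolve_right hA, h₁⟩))

/-- For `A = !![η, -1; εα, -εσ]` (whose (1,2) entry `-1` is nonzero),
`D ≠ 0`, `e₂ = (0,1)ᵀ` and `Θ(t) = D² ∫₀ᵗ (e^{As} e₂)(e^{As} e₂)ᵀ ds`, the matrix `Θ(t)`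
is positive definite for every `t > 0`; in particular `det Θ(t) > 0`. -/
theorem stmt14 (η ε α σ D : ℝ) (hD : D ≠ 0)
    (A : Matrix (Fin 2) (Fin 2) ℝ) (hA : A = !![η, -1; ε * α, -(ε * σ)])
    (Θ : ℝ → Matrix (Fin 2) (Fin 2) ℝ)
    (hΘ : ∀ (t : ℝ) (i j : Fin 2), Θ t i j =
      D ^ 2 * ∫ s in (0:ℝ)..t,
        ((NormedSpace.exp (s • A)).mulVec ![0, 1]) i *
        ((NormedSpace.exp (s • A)).mulVec ![0, 1]) j) :
    ∀ t : ℝ, 0 < t → (Θ t).PosDef ∧ 0 < (Θ t).det := by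
  intro t ht
  set v : ℝ → Fin 2 → ℝ := fun s => NormedSpace.exp (s • A) *ᵥ ![0, 1]
  have hv : Continuous v := continuous_iff_continuousAt.2 fun s =>
    (hasDerivAt_exp_smul_mulVec A _ s).continuousAt
  have hΘt : Θ t = D ^ 2 • gramian v t := by
    ext i j
    simp only [hΘ, gramian, Matrix.smul_apply, smul_eq_mul, of_apply, v]
  have hA₀₁ : A 0 1 ≠ 0 := by simp [hA]
  have hGramian : (gramian v t).PosDef := gramian_posDef hv fun x hx =>
    exists_dotProduct_exp_smul_mulVec_ne_zero A
      (dotProduct_ne_zero_or_dotProduct_mulVec_ne_zero hA₀₁ hx) ht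
  have hΘpos : (Θ t).PosDef := hΘt ▸ hGramian.smul (by positivity)
  exact ⟨hΘpos, hΘpos.det_pos⟩
end

section
/- For all real c > 0, D > 0 and z ∈ ℝ, the improper integral converges and (c/√(2πD²)) ∫₀^∞ t^{-1/2} exp(-(z - ct)²/(2D²t)) dt = exp((z - |z|)c/D²). In particular the value is 1 when z ≥ 0 and exp(2cz/D²) when z < 0. -/
/-!
Substituting `t = x²` turns the integral into `2 ∫₀^∞ exp (-(z - c x²)² / (2D²x²)) dx`, and
completing the square gives
`exp (-(z - c x²)² / (2D²x²)) = exp ((z - |z|) c / D²) · exp (-(c x - |z| / x)² / (2D²))`.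
The Cauchy–Schlömilch transformation `∫₀^∞ f (α x - β / x) dx = (2α)⁻¹ ∫_ℝ f` for even integrable
`f` then reduces everything to a Gaussian integral. For `β > 0` it follows by averaging the
integral with its image under the inversion `x ↦ β / (α x)`: the averaged integrand is
`(2α)⁻¹ f(u) du` for `u = α x - β / x`, a bijection of `(0, ∞)` onto `ℝ`.
-/

open MeasureTheory Real Set

lemma abs_two_mul_rpow_smul_rpow_neg_half_mul (g : ℝ → ℝ) {x : ℝ} (hx : 0 < x) :
    (|(2:ℝ)| * x ^ ((2:ℝ) - 1)) • ((x ^ (2:ℝ)) ^ (-(1:ℝ)/2) * g (x ^ (2:ℝ))) = 2 * g (x ^ 2) := by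
  have hx' : x ^ ((2:ℝ) - 1) * (x ^ (2:ℝ)) ^ (-(1:ℝ)/2) = 1 := by
    rw [← rpow_mul hx.le, ← rpow_add hx]; norm_num
  rw [smul_eq_mul, ← mul_assoc, mul_assoc |(2:ℝ)|, hx', rpow_two]
  norm_num

lemma integral_Ioi_rpow_neg_half_mul (g : ℝ → ℝ) :
    ∫ t in Ioi 0, t ^ (-(1:ℝ)/2) * g t = 2 * ∫ x in Ioi 0, g (x ^ 2) := by
  rw [← integral_comp_rpow_Ioi _ two_ne_zero, ← integral_const_mul]
  exact setIntegral_congr_fun measurableSet_Ioi fun x hx =>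
    abs_two_mul_rpow_smul_rpow_neg_half_mul g hx

lemma integrableOn_Ioi_rpow_neg_half_mul_iff (g : ℝ → ℝ) :
    IntegrableOn (fun t => t ^ (-(1:ℝ)/2) * g t) (Ioi 0) ↔
      IntegrableOn (fun x => g (x ^ 2)) (Ioi 0) := by
  rw [← integrableOn_Ioi_comp_rpow_iff _ two_ne_zero,
    integrableOn_congr_fun (s := Ioi 0)
      (fun x (hx : 0 < x) => abs_two_mul_rpow_smul_rpow_neg_half_mul g hx) measurableSet_Ioi]
  exact integrable_const_mul_iff (isUnit_iff_ne_zero.2 two_ne_zero) _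

section CauchySchlomilch

lemma hasDerivAt_mul_sub_div (α β : ℝ) {x : ℝ} (hx : x ≠ 0) :
    HasDerivAt (fun x => α * x - β / x) (α + β / x ^ 2) x := by
  have h := ((hasDerivAt_id x).const_mul α).sub ((hasDerivAt_inv hx).const_mul β)
  refine (h.congr_deriv (by ring)).congr_of_eventuallyEq (Filter.Eventually.of_forall fun y => ?_)
  simp [div_eq_mul_inv]

variable {α β : ℝ}

lemma strictMonoOn_mul_sub_div (hα : 0 < α) (hβ : 0 ≤ β) :
    StrictMonoOn (fun x => α * x - β / x) (Ioi 0) := by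
  intro x (hx : 0 < x) y _ hxy
  have : β / y ≤ β / x := div_le_div_of_nonneg_left hβ hx hxy.le
  have : α * x < α * y := mul_lt_mul_of_pos_left hxy hα
  simp only
  linarith

/-- The inverse of `x ↦ α x - β / x` is `u ↦ (u + √(u² + 4αβ)) / (2α)`. -/
lemma image_mul_sub_div_Ioi (hα : 0 < α) (hβ : 0 < β) :
    (fun x => α * x - β / x) '' Ioi 0 = univ := by
  refine eq_univ_of_forall fun u => ?_
  set s := √(u ^ 2 + 4 * α * β)
  have hs : s ^ 2 = u ^ 2 + 4 * α * β := sq_sqrt (by positivity)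
  have hus : 0 < u + s := by
    have : |u| < s := by
      rw [← sqrt_sq_eq_abs]; exact sqrt_lt_sqrt (sq_nonneg u) (by linarith [mul_pos hα hβ])
    linarith [neg_abs_le u]
  refine ⟨(u + s) / (2 * α), div_pos hus (by positivity), ?_⟩
  field_simp
  linear_combination hs

lemma integral_Ioi_eq_integral_Ioi_comp_div {k : ℝ} (hk : 0 < k) (g : ℝ → ℝ) :
    ∫ x in Ioi 0, g x = ∫ x in Ioi 0, k / x ^ 2 * g (k / x) := by
  have himage : (fun x => k / x) '' Ioi 0 = Ioi 0 := by
    refine Subset.antisymm (image_subset_iff.2 fun x (hx : 0 < x) => div_pos hk hx) ?_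
    exact fun y (hy : 0 < y) => ⟨k / y, div_pos hk hy, div_div_cancel₀ hk.ne'⟩
  have hderiv : ∀ x ∈ Ioi (0:ℝ), HasDerivWithinAt (fun x => k / x) (-k / x ^ 2) (Ioi 0) x :=
    fun x (hx : 0 < x) => by
      simpa [div_eq_mul_inv] using ((hasDerivAt_inv hx.ne').const_mul k).hasDerivWithinAt
  have hinj : InjOn (fun x => k / x) (Ioi 0) := fun x _ y _ h => by
    simpa [div_div_cancel₀ hk.ne'] using congrArg (k / ·) h
  rw [← himage, integral_image_eq_integral_abs_deriv_smul measurableSet_Ioi hderiv hinj, himage]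
  refine setIntegral_congr_fun measurableSet_Ioi fun x _ => ?_
  rw [smul_eq_mul, neg_div, abs_neg, abs_of_nonneg (by positivity)]

lemma abs_deriv_smul_comp_mul_sub_div (hα : 0 < α) (hβ : 0 ≤ β) (f : ℝ → ℝ) :
    (fun x => |α + β / x ^ 2| • f (α * x - β / x)) =
      fun x => (α + β / x ^ 2) * f (α * x - β / x) := by
  ext x
  rw [smul_eq_mul, abs_of_pos (by positivity)]

lemma integrableOn_Ioi_deriv_mul_comp_mul_sub_div_iff (hα : 0 < α) (hβ : 0 < β) (f : ℝ → ℝ) :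
    IntegrableOn (fun x => (α + β / x ^ 2) * f (α * x - β / x)) (Ioi 0) ↔ Integrable f := by
  have := integrableOn_image_iff_integrableOn_abs_deriv_smul measurableSet_Ioi
    (fun x (hx : 0 < x) => (hasDerivAt_mul_sub_div α β hx.ne').hasDerivWithinAt)
    (strictMonoOn_mul_sub_div hα hβ.le).injOn f
  rw [image_mul_sub_div_Ioi hα hβ, integrableOn_univ,
    abs_deriv_smul_comp_mul_sub_div hα hβ.le] at this
  exact this.symm

lemma integral_Ioi_deriv_mul_comp_mul_sub_div (hα : 0 < α) (hβ : 0 < β) (f : ℝ → ℝ) :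
    ∫ x in Ioi 0, (α + β / x ^ 2) * f (α * x - β / x) = ∫ u, f u := by
  have := integral_image_eq_integral_abs_deriv_smul measurableSet_Ioi
    (fun x (hx : 0 < x) => (hasDerivAt_mul_sub_div α β hx.ne').hasDerivWithinAt)
    (strictMonoOn_mul_sub_div hα hβ.le).injOn f
  rw [image_mul_sub_div_Ioi hα hβ, setIntegral_univ,
    abs_deriv_smul_comp_mul_sub_div hα hβ.le] at this
  exact this.symm

theorem integrableOn_Ioi_comp_mul_sub_div (hα : 0 < α) (hβ : 0 ≤ β) {f : ℝ → ℝ}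
    (hf : Integrable f) : IntegrableOn (fun x => f (α * x - β / x)) (Ioi 0) := by
  rcases hβ.eq_or_lt with rfl | hβ
  · simpa using (integrableOn_Ioi_comp_mul_left_iff f 0 hα).2 hf.integrableOn
  · have hJ := (integrableOn_Ioi_deriv_mul_comp_mul_sub_div_iff hα hβ f).2 hf
    have hbound : ∀ x : ℝ, ‖(α + β / x ^ 2)⁻¹‖ ≤ α⁻¹ := fun x => by
      rw [norm_inv, Real.norm_of_nonneg (by positivity)]
      exact inv_anti₀ hα (le_add_of_nonneg_right (by positivity))
    have hmeas : Measurable fun x : ℝ => (α + β / x ^ 2)⁻¹ := by fun_prop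
    refine (hJ.bdd_mul hmeas.aestronglyMeasurable (Filter.Eventually.of_forall hbound)).congr
      (Filter.Eventually.of_forall fun x => ?_)
    exact inv_mul_cancel_left₀ (by positivity) _

theorem integral_Ioi_comp_mul_sub_div (hα : 0 < α) (hβ : 0 ≤ β) {f : ℝ → ℝ}
    (hf : Integrable f) (heven : ∀ u, f (-u) = f u) :
    ∫ x in Ioi 0, f (α * x - β / x) = (∫ u, f u) / (2 * α) := by
  rcases hβ.eq_or_lt with rfl | hβ
  · have hfull : ∫ u, f u = 2 * ∫ u in Ioi 0, f u := by
      rw [← integral_comp_abs]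
      congr with u
      rcases abs_choice u with h | h <;> rw [h]
      exact (heven u).symm
    simp only [zero_div, sub_zero]
    rw [integral_comp_mul_left_Ioi _ _ hα, mul_zero, hfull, smul_eq_mul]
    field_simp
  · have hinv := integral_Ioi_eq_integral_Ioi_comp_div (div_pos hβ hα)
      (fun x => f (α * x - β / x))
    have hsplit : ∀ x ∈ Ioi (0:ℝ), β / α / x ^ 2 * f (α * (β / α / x) - β / (β / α / x)) =
        α⁻¹ * ((α + β / x ^ 2) * f (α * x - β / x)) - f (α * x - β / x) :=
      fun x (hx : 0 < x) => by
        have harg : α * (β / α / x) - β / (β / α / x) = -(α * x - β / x) := by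
          field_simp
          ring
        rw [harg, heven]
        field_simp
        ring
    rw [setIntegral_congr_fun measurableSet_Ioi hsplit,
      integral_sub (((integrableOn_Ioi_deriv_mul_comp_mul_sub_div_iff hα hβ f).2 hf).const_mul _)
        (integrableOn_Ioi_comp_mul_sub_div hα hβ.le hf),
      integral_const_mul, integral_Ioi_deriv_mul_comp_mul_sub_div hα hβ] at hinv
    rw [eq_div_iff (by positivity)]
    linear_combination α * hinv + (∫ u, f u) * mul_inv_cancel₀ hα.ne'

end CauchySchlomilch

lemma neg_sq_sub_mul_sq_div_eq (c D z : ℝ) {x : ℝ} (hx : x ≠ 0) (hD : D ≠ 0) :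
    -(z - c * x ^ 2) ^ 2 / (2 * D ^ 2 * x ^ 2) =
      (z - |z|) * c / D ^ 2 + -(2 * D ^ 2)⁻¹ * (c * x - |z| / x) ^ 2 := by
  field_simp
  linear_combination sq_abs z

/-- For `c > 0`, `D > 0`, `z ∈ ℝ`, the improper integral converges and
`(c/√(2πD²)) ∫₀^∞ t^{-1/2} exp(-(z - ct)²/(2D²t)) dt = exp((z - |z|)c/D²)`; in particular
the value is `1` for `z ≥ 0` and `exp(2cz/D²)` for `z < 0`. -/
theorem stmt17 (c D z : ℝ) (hc : 0 < c) (hD : 0 < D) :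
    IntegrableOn
      (fun t : ℝ => t ^ (-(1:ℝ)/2) * Real.exp (-(z - c * t) ^ 2 / (2 * D ^ 2 * t)))
      (Set.Ioi 0) ∧
    c / Real.sqrt (2 * Real.pi * D ^ 2) *
        ∫ t in Set.Ioi (0:ℝ),
          t ^ (-(1:ℝ)/2) * Real.exp (-(z - c * t) ^ 2 / (2 * D ^ 2 * t)) =
      Real.exp ((z - |z|) * c / D ^ 2) ∧
    (0 ≤ z → Real.exp ((z - |z|) * c / D ^ 2) = 1) ∧
    (z < 0 → Real.exp ((z - |z|) * c / D ^ 2) = Real.exp (2 * c * z / D ^ 2)) := by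
  set g : ℝ → ℝ := fun u => exp (-(2 * D ^ 2)⁻¹ * u ^ 2)
  have hg : Integrable g := integrable_exp_neg_mul_sq (by positivity)
  have hg_even : ∀ u, g (-u) = g u := fun u => by simp [g]
  have hsubst : ∀ x ∈ Ioi (0:ℝ), exp (-(z - c * x ^ 2) ^ 2 / (2 * D ^ 2 * x ^ 2)) =
      exp ((z - |z|) * c / D ^ 2) * g (c * x - |z| / x) := fun x (hx : 0 < x) => by
    rw [neg_sq_sub_mul_sq_div_eq c D z hx.ne' hD.ne', exp_add]
  refine ⟨?_, ?_, fun hz => ?_, fun hz => ?_⟩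
  · rw [integrableOn_Ioi_rpow_neg_half_mul_iff (fun t => exp (-(z - c * t) ^ 2 / (2 * D ^ 2 * t))),
      integrableOn_congr_fun hsubst measurableSet_Ioi]
    exact (integrableOn_Ioi_comp_mul_sub_div hc (abs_nonneg z) hg).const_mul _
  · rw [integral_Ioi_rpow_neg_half_mul (fun t => exp (-(z - c * t) ^ 2 / (2 * D ^ 2 * t))),
      setIntegral_congr_fun measurableSet_Ioi hsubst, integral_const_mul,
      integral_Ioi_comp_mul_sub_div hc (abs_nonneg z) hg hg_even, integral_gaussian,
      div_inv_eq_mul]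
    rw [show 2 * π * D ^ 2 = π * (2 * D ^ 2) by ring]
    field_simp
  · rw [abs_of_nonneg hz, sub_self, zero_mul, zero_div, exp_zero]
  · rw [abs_of_neg hz]
    congr 1
    ring
end

section
/- For all real c > 0, D > 0 and δ > 0, ∫_{-∞}^{∞} (2πD²δ)^{-1/2} exp(-(z - cδ)²/(2D²δ)) · exp((-z - |z|)c/D²) dz = (2/√π) ∫_{c√δ/(√2 D)}^{∞} e^{-u²} du. (The right-hand side equals 1 - erf(c√δ/(√2 D)); the left-hand side is the probability that the drifted Brownian motion dy = c dt + D dW started at 0 returns to 0 at some time t ≥ δ.) -/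
open MeasureTheory Set Real

/-!
For `z ≤ 0` the hitting factor is `1`, and for `z > 0` it turns the Gaussian centred at `cδ`
into the one centred at `-cδ`, so the integrand is `K exp(-(|z| + cδ)² / (2D²δ))`. By symmetry its
integral is twice a Gaussian tail beyond `cδ`, which rescales to the complementary error function.
-/

theorem integral_Ioi_comp_add_right {E : Type*} [NormedAddCommGroup E] [NormedSpace ℝ E]
    (f : ℝ → E) (a d : ℝ) : ∫ x in Ioi a, f (x + d) = ∫ x in Ioi (a + d), f x := by
  have hd : MeasurableEmbedding fun x : ℝ => x + d := (Homeomorph.addRight d).measurableEmbedding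
  have h := hd.setIntegral_map (μ := volume) f (Ioi (a + d))
  rw [map_add_right_eq_self volume d] at h
  simpa only [preimage_add_const_Ioi, add_sub_cancel_right] using h.symm

theorem integral_Ioi_exp_neg_sq_div {s : ℝ} (hs : 0 < s) (a : ℝ) :
    ∫ x in Ioi a, exp (-x ^ 2 / s) = √s * ∫ u in Ioi (a / √s), exp (-u ^ 2) := by
  have hs' : 0 < √s := sqrt_pos.mpr hs
  have h := integral_comp_mul_left_Ioi (fun u => exp (-u ^ 2)) a (inv_pos.mpr hs')
  simp only [inv_inv, smul_eq_mul, inv_mul_eq_div] at h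
  rw [← h]
  refine setIntegral_congr_fun measurableSet_Ioi fun x _ => ?_
  rw [div_pow, sq_sqrt hs.le, neg_div]

theorem integrable_exp_neg_sq_abs_add_div {m s : ℝ} (hm : 0 ≤ m) (hs : 0 < s) :
    Integrable fun x : ℝ => exp (-(|x| + m) ^ 2 / s) := by
  refine (integrable_exp_neg_mul_sq (inv_pos.mpr hs)).mono' (by fun_prop)
    (ae_of_all _ fun x => ?_)
  rw [norm_of_nonneg (exp_pos _).le, exp_le_exp, neg_mul, neg_div, neg_le_neg_iff,
    inv_mul_eq_div, ← sq_abs x]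
  gcongr
  linarith [abs_nonneg x]

theorem integral_exp_neg_sq_abs_add_div (m : ℝ) {s : ℝ} (hs : 0 < s) :
    ∫ x : ℝ, exp (-(|x| + m) ^ 2 / s) = 2 * √s * ∫ u in Ioi (m / √s), exp (-u ^ 2) := by
  rw [integral_comp_abs (f := fun x => exp (-(x + m) ^ 2 / s)),
    integral_Ioi_comp_add_right (fun x => exp (-x ^ 2 / s)), zero_add,
    integral_Ioi_exp_neg_sq_div hs, mul_assoc]

theorem exp_neg_sq_mul_exp_eq_exp_neg_abs_add_sq (c D δ z : ℝ) (hD : D ≠ 0) (hδ : δ ≠ 0) :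
    exp (-(z - c * δ) ^ 2 / (2 * D ^ 2 * δ)) * exp ((-z - |z|) * c / D ^ 2) =
      exp (-(|z| + c * δ) ^ 2 / (2 * D ^ 2 * δ)) := by
  rw [← exp_add]
  congr 1
  rcases le_total z 0 with hz | hz
  · rw [abs_of_nonpos hz]
    ring
  · rw [abs_of_nonneg hz]
    field_simp
    ring

/-- For `c > 0`, `D > 0`, `δ > 0`,
`∫_{-∞}^{∞} (2πD²δ)^{-1/2} exp(-(z - cδ)²/(2D²δ)) · exp((-z - |z|)c/D²) dz
  = (2/√π) ∫_{c√δ/(√2 D)}^{∞} e^{-u²} du`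
(the probability that the drifted Brownian motion `dy = c dt + D dW` started at `0`
returns to `0` at some time `t ≥ δ`). -/
theorem stmt18 (c D δ : ℝ) (hc : 0 < c) (hD : 0 < D) (hδ : 0 < δ) :
    Integrable (fun z : ℝ =>
      (Real.sqrt (2 * Real.pi * D ^ 2 * δ))⁻¹ *
        Real.exp (-(z - c * δ) ^ 2 / (2 * D ^ 2 * δ)) *
        Real.exp ((-z - |z|) * c / D ^ 2)) ∧
    (∫ z : ℝ,
        (Real.sqrt (2 * Real.pi * D ^ 2 * δ))⁻¹ *
          Real.exp (-(z - c * δ) ^ 2 / (2 * D ^ 2 * δ)) *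
          Real.exp ((-z - |z|) * c / D ^ 2)) =
      2 / Real.sqrt Real.pi *
        ∫ u in Set.Ioi (c * Real.sqrt δ / (Real.sqrt 2 * D)), Real.exp (-u ^ 2) := by
  have hs : 0 < 2 * D ^ 2 * δ := by positivity
  simp_rw [mul_assoc _ (exp _), exp_neg_sq_mul_exp_eq_exp_neg_abs_add_sq c D δ _ hD.ne' hδ.ne']
  refine ⟨(integrable_exp_neg_sq_abs_add_div (by positivity) hs).const_mul _, ?_⟩
  have hsqrt : √(2 * D ^ 2 * δ) = √2 * D * √δ := by
    rw [sqrt_mul (by positivity), sqrt_mul zero_le_two, sqrt_sq hD.le]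
  have hK : (√(2 * π * D ^ 2 * δ))⁻¹ * (2 * √(2 * D ^ 2 * δ)) = 2 / √π := by
    rw [show 2 * π * D ^ 2 * δ = π * (2 * D ^ 2 * δ) by ring, sqrt_mul pi_pos.le]
    field_simp
  have hA : c * δ / √(2 * D ^ 2 * δ) = c * √δ / (√2 * D) := by
    rw [hsqrt]
    field_simp
    rw [sq_sqrt hδ.le]
  rw [integral_const_mul, integral_exp_neg_sq_abs_add_div _ hs, ← mul_assoc, hK, hA]
end
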